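/- Let Σ₁ and Σ₂ be d×d real symmetric positive definite matrices. Then the matrix Δ* = Σ₁⁻¹ − Σ₂⁻¹ is the unique d×d real matrix Δ satisfying the stationarity equation (1/2)(Σ₁ Δ Σ₂ + Σ₂ Δ Σ₁) = Σ₂ − Σ₁, and Δ* is the unique global minimizer over all d×d real matrices of the D-trace loss L(Δ) = (1/4)(tr(Σ₁ Δ Σ₂ Δᵀ) + tr(Σ₂ Δ Σ₁ Δᵀ)) − tr(Δ (Σ₂ − Σ₁)ᵀ). -/

import Mathlib

open Matrix

/-- The D-trace loss `L(Δ) = (1/4)(⟨S1Δ, ΔS2⟩ + ⟨S2Δ, ΔS1⟩) − ⟨Δ, C⟩`,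
where `⟨A, B⟩ = tr(ABᵀ)`. -/
noncomputable def dTraceLoss {d : ℕ} (S1 S2 C Δ : Matrix (Fin d) (Fin d) ℝ) : ℝ :=
  (1 / 4) * (((S1 * Δ) * (Δ * S2)ᵀ).trace + ((S2 * Δ) * (Δ * S1)ᵀ).trace)
    - (Δ * Cᵀ).trace

variable {d : ℕ}

lemma trace_mul_transpose_pos {M : Matrix (Fin d) (Fin d) ℝ} (hM : M ≠ 0) :
    0 < (M * Mᵀ).trace := by
  obtain ⟨i, j, hij⟩ : ∃ i j, M i j ≠ 0 := by
    by_contra h; push_neg at h; exact hM (by ext i j; simp [h i j])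
  rw [Matrix.trace]
  refine Finset.sum_pos' (fun k _ => ?_) ⟨i, Finset.mem_univ i, ?_⟩
  · simp only [Matrix.diag_apply, Matrix.mul_apply, Matrix.transpose_apply]
    exact Finset.sum_nonneg fun l _ => mul_self_nonneg _
  · simp only [Matrix.diag_apply, Matrix.mul_apply, Matrix.transpose_apply]
    exact (mul_self_pos.2 hij).trans_le
      (Finset.single_le_sum (fun l _ => mul_self_nonneg (M i l)) (Finset.mem_univ j))

open scoped MatrixOrder in
lemma key_pos {S1 S2 : Matrix (Fin d) (Fin d) ℝ} (h1 : S1.PosDef) (h2 : S2.PosDef)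
    {E : Matrix (Fin d) (Fin d) ℝ} (hE : E ≠ 0) : 0 < (S1 * E * S2 * Eᵀ).trace := by
  set A := CFC.sqrt S1 with hA
  set B := CFC.sqrt S2 with hB
  have hAA : A * A = S1 := CFC.sqrt_mul_sqrt_self S1 h1.posSemidef.nonneg
  have hBB : B * B = S2 := CFC.sqrt_mul_sqrt_self S2 h2.posSemidef.nonneg
  have hAt : Aᵀ = A := by
    have := (CFC.sqrt_nonneg S1).posSemidef.1
    simpa [Matrix.conjTranspose, Matrix.IsSymm] using this
  have hBt : Bᵀ = B := by
    have := (CFC.sqrt_nonneg S2).posSemidef.1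
    simpa [Matrix.conjTranspose, Matrix.IsSymm] using this
  have hdA : A.det ≠ 0 := fun h =>
    h1.det_pos.ne' (by rw [← hAA, Matrix.det_mul, h, mul_zero])
  have hdB : B.det ≠ 0 := fun h =>
    h2.det_pos.ne' (by rw [← hBB, Matrix.det_mul, h, mul_zero])
  have hM : A * E * B ≠ 0 := by
    intro h
    apply hE
    have hcalc : A⁻¹ * (A * E * B) * B⁻¹ = E := by
      simp only [← Matrix.mul_assoc]
      rw [Matrix.nonsing_inv_mul A hdA.isUnit, Matrix.one_mul, Matrix.mul_assoc,
        Matrix.mul_nonsing_inv B hdB.isUnit, Matrix.mul_one]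
    rw [h] at hcalc
    simpa using hcalc.symm
  have e2 : (A*E*B) * (A*E*B)ᵀ = A*E*B*B*Eᵀ*A := by
    simp only [Matrix.transpose_mul, hAt, hBt, Matrix.mul_assoc]
  have e0 : S1 * E * S2 * Eᵀ = A * (A*E*B*B*Eᵀ) := by
    rw [← hAA, ← hBB]
    simp only [Matrix.mul_assoc]
  have e1 : (S1 * E * S2 * Eᵀ).trace = ((A*E*B*B*Eᵀ) * A).trace := by
    rw [e0, Matrix.trace_mul_comm]
  rw [e1, ← e2]
  exact trace_mul_transpose_pos hM

lemma swap4 {S1 S2 X Y : Matrix (Fin d) (Fin d) ℝ} (hs1 : S1ᵀ = S1) (hs2 : S2ᵀ = S2) :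
    (S1*(X*(S2*Yᵀ))).trace = (S1*(Y*(S2*Xᵀ))).trace := by
  conv_lhs => rw [← Matrix.trace_transpose]
  simp only [Matrix.transpose_mul, Matrix.transpose_transpose, hs1, hs2]
  rw [Matrix.trace_mul_comm]
  simp only [Matrix.mul_assoc]

lemma trace_swapT (X C : Matrix (Fin d) (Fin d) ℝ) : (C * Xᵀ).trace = (X * Cᵀ).trace := by
  conv_lhs => rw [← Matrix.trace_transpose]
  simp only [Matrix.transpose_mul, Matrix.transpose_transpose]

/-- For symmetric positive definite `S1, S2`, the matrix `Δ* = S1⁻¹ − S2⁻¹`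
is the unique solution of the stationarity equation `(1/2)(S1 Δ S2 + S2 Δ S1) = S2 − S1`,
and the unique global minimizer of the D-trace loss with linear term `S2 − S1`. -/
theorem stmt0 {d : ℕ} (S1 S2 : Matrix (Fin d) (Fin d) ℝ)
    (h1 : S1.PosDef) (h2 : S2.PosDef) :
    (((1 : ℝ) / 2) • (S1 * (S1⁻¹ - S2⁻¹) * S2 + S2 * (S1⁻¹ - S2⁻¹) * S1) = S2 - S1
      ∧ ∀ Δ : Matrix (Fin d) (Fin d) ℝ,
          ((1 : ℝ) / 2) • (S1 * Δ * S2 + S2 * Δ * S1) = S2 - S1 → Δ = S1⁻¹ - S2⁻¹)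
    ∧ (∀ Δ : Matrix (Fin d) (Fin d) ℝ, Δ ≠ S1⁻¹ - S2⁻¹ →
        dTraceLoss S1 S2 (S2 - S1) (S1⁻¹ - S2⁻¹) < dTraceLoss S1 S2 (S2 - S1) Δ) := by
  have hd1 : IsUnit S1.det := h1.det_pos.ne'.isUnit
  have hd2 : IsUnit S2.det := h2.det_pos.ne'.isUnit
  have hs1 : S1ᵀ = S1 := by simpa [Matrix.conjTranspose, Matrix.IsSymm] using h1.1
  have hs2 : S2ᵀ = S2 := by simpa [Matrix.conjTranspose, Matrix.IsSymm] using h2.1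
  set D : Matrix (Fin d) (Fin d) ℝ := S1⁻¹ - S2⁻¹ with hDdef
  set C : Matrix (Fin d) (Fin d) ℝ := S2 - S1 with hCdef
  have key1 : S1 * D * S2 = C := by
    rw [hDdef, Matrix.mul_sub, Matrix.mul_nonsing_inv S1 hd1, Matrix.sub_mul,
      Matrix.one_mul, Matrix.mul_assoc, Matrix.nonsing_inv_mul S2 hd2, Matrix.mul_one, hCdef]
  have key2 : S2 * D * S1 = C := by
    rw [hDdef, Matrix.mul_sub, Matrix.mul_nonsing_inv S2 hd2, Matrix.sub_mul,
      Matrix.one_mul, Matrix.mul_assoc, Matrix.nonsing_inv_mul S1 hd1, Matrix.mul_one, hCdef]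
  have stat : ((1 : ℝ) / 2) • (S1 * D * S2 + S2 * D * S1) = C := by
    rw [key1, key2, ← two_smul ℝ C, smul_smul]
    norm_num
  clear_value D C
  refine ⟨⟨stat, ?_⟩, ?_⟩
  · -- uniqueness of the stationary point
    intro Δ hΔ
    by_contra hne
    have hE : Δ - D ≠ 0 := sub_ne_zero.2 hne
    have hsum : S1 * Δ * S2 + S2 * Δ * S1 = S1 * D * S2 + S2 * D * S1 := by
      have := hΔ.trans stat.symm
      have h2' := congrArg (fun M => (2 : ℝ) • M) this
      simpa [smul_smul] using h2'
    have heq : S1 * (Δ - D) * S2 + S2 * (Δ - D) * S1 = 0 := by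
      rw [Matrix.mul_sub, Matrix.sub_mul, Matrix.mul_sub, Matrix.sub_mul,
        sub_add_sub_comm, hsum, sub_self]
    have p1 := key_pos h1 h2 hE
    have p2 := key_pos h2 h1 hE
    have h0 : (S1 * (Δ - D) * S2 * (Δ - D)ᵀ).trace + (S2 * (Δ - D) * S1 * (Δ - D)ᵀ).trace = 0 := by
      rw [← Matrix.trace_add, ← Matrix.add_mul, heq, Matrix.zero_mul, Matrix.trace_zero]
    linarith
  · -- strict global minimality
    intro Δ hne
    have hE : Δ - D ≠ 0 := sub_ne_zero.2 hne
    set E : Matrix (Fin d) (Fin d) ℝ := Δ - D with hEdef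
    have hΔ : Δ = D + E := by rw [hEdef]; abel
    have p1 : 0 < (S1 * (E * (S2 * Eᵀ))).trace := by
      simpa only [Matrix.mul_assoc] using key_pos h1 h2 hE
    have p2 : 0 < (S2 * (E * (S1 * Eᵀ))).trace := by
      simpa only [Matrix.mul_assoc] using key_pos h2 h1 hE
    have hx1 : (S1 * (D * (S2 * Eᵀ))).trace = (E * Cᵀ).trace := by
      rw [show S1 * (D * (S2 * Eᵀ)) = (S1 * D * S2) * Eᵀ by simp only [Matrix.mul_assoc],
        key1, trace_swapT]
    have hx1' : (S1 * (E * (S2 * Dᵀ))).trace = (E * Cᵀ).trace := by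
      rw [swap4 hs1 hs2, hx1]
    have hx2 : (S2 * (D * (S1 * Eᵀ))).trace = (E * Cᵀ).trace := by
      rw [show S2 * (D * (S1 * Eᵀ)) = (S2 * D * S1) * Eᵀ by simp only [Matrix.mul_assoc],
        key2, trace_swapT]
    have hx2' : (S2 * (E * (S1 * Dᵀ))).trace = (E * Cᵀ).trace := by
      rw [swap4 hs2 hs1, hx2]
    rw [hΔ]
    unfold dTraceLoss
    simp only [Matrix.transpose_add, Matrix.transpose_mul, hs1, hs2, Matrix.mul_add,
      Matrix.add_mul, Matrix.trace_add, Matrix.mul_assoc]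
    rw [hx1, hx1', hx2, hx2']
    linarith
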